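/- Let G be an inverse semigroup, H' ⊆ G a finite sub-inverse semigroup, and A a G-algebra. For all g, h, k ∈ G_H and all a ∈ A_{g g*}, b ∈ A_{h h*}, c ∈ A_{k k*}, the following identity holds in 𝔽(G,A): [h* k ∈ H] · a·α_g(α_{h*}(b*·c)) · (g h* k) = [g h* k ∈ G_H]·[g ≡ g h* k] · a·α_{g h*}(b*)·α_{g h*}(c) · (g h* k), where [P] is the scalar 1 if P holds and 0 otherwise. (This is the identity x·⟨y,z⟩_{B₀} = ⟨x,y⟩_{E₀}·z on standard elements x = a⋊g, y = b⋊h, z = c⋊k.) -/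

import Mathlib

/-! Common setup: inverse semigroups, G-algebras, and the universal *-algebra 𝔽(G,A). -/

noncomputable section

/-- An inverse semigroup: a semigroup in which every element `g` has a unique
generalized inverse, denoted `star g`. -/
class InverseSemigroup (G : Type*) extends Semigroup G, Star G where
  mul_star_mul_self : ∀ g : G, g * star g * g = g
  star_mul_self_mul_star : ∀ g : G, star g * g * star g = star g
  star_unique : ∀ g h : G, g * h * g = g → h * g * h = h → h = star g

namespace Green

/-! ### The free complex *-algebra on a set of generators

The free complex *-algebra on a set `Y` is realized as the monoid algebra of the free
monoid on the letters `Y × Bool` (a generator together with a formal star flag); its star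
operation conjugates coefficients, reverses words and flips the star flags. -/

/-- The free complex *-algebra on the set `Y`. -/
abbrev FreeStar (Y : Type*) := MonoidAlgebra ℂ (FreeMonoid (Y × Bool))

namespace FreeStar

variable {Y : Type*}

/-- Star of a word: reverse it and flip all star flags. -/
def wordStar (w : FreeMonoid (Y × Bool)) : FreeMonoid (Y × Bool) :=
  FreeMonoid.ofList (((FreeMonoid.toList w).map fun x => (x.1, !x.2)).reverse)

lemma wordStar_mul (v w : FreeMonoid (Y × Bool)) :
    wordStar (v * w) = wordStar w * wordStar v := by
  simp [wordStar, FreeMonoid.toList_mul]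

lemma wordStar_wordStar (w : FreeMonoid (Y × Bool)) : wordStar (wordStar w) = w := by
  simp [wordStar, List.map_reverse, List.map_map, Function.comp_def]

/-- The star operation on the free complex *-algebra, as an additive map. -/
def starAux : FreeStar Y →+ FreeStar Y :=
  MonoidAlgebra.coeffAddEquiv.symm.toAddMonoidHom.comp (((Finsupp.mapDomain.addMonoidHom wordStar).comp
    (Finsupp.mapRange.addMonoidHom (starRingEnd ℂ).toAddMonoidHom)).comp
      MonoidAlgebra.coeffAddEquiv.toAddMonoidHom)

lemma starAux_apply (f : FreeStar Y) :
    starAux f = MonoidAlgebra.ofCoeff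
      (Finsupp.mapDomain wordStar (Finsupp.mapRange (starRingEnd ℂ) (map_zero _) f.coeff)) :=
  rfl

lemma starAux_single (w : FreeMonoid (Y × Bool)) (c : ℂ) :
    starAux (MonoidAlgebra.single w c) = MonoidAlgebra.single (wordStar w) (starRingEnd ℂ c) := by
  rw [starAux_apply]
  simp only [MonoidAlgebra.coeff_single, Finsupp.mapRange_single, Finsupp.mapDomain_single,
    MonoidAlgebra.ofCoeff_single]

instance instStarRing : StarRing (FreeStar Y) where
  star := starAux
  star_involutive := by
    intro f
    induction f using MonoidAlgebra.induction_linear with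
    | zero => simp
    | add f g hf hg => simp_all [map_add]
    | single w c => simp [starAux_single, wordStar_wordStar, starRingEnd_self_apply]
  star_mul := by
    intro f g
    show starAux (f * g) = starAux g * starAux f
    induction f using MonoidAlgebra.induction_linear with
    | zero => simp
    | add f f' hf hf' => simp [mul_add, add_mul, map_add, hf, hf']
    | single w c =>
      induction g using MonoidAlgebra.induction_linear with
      | zero => simp
      | add g g' hg hg' => simp [mul_add, add_mul, map_add, hg, hg']
      | single v d =>
        simp only [MonoidAlgebra.single_mul_single, starAux_single, wordStar_mul, map_mul]
        rw [mul_comm]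
  star_add := map_add _

end FreeStar

section GAlgebra

variable {G : Type*} [InverseSemigroup G]
variable {A : Type*} [NonUnitalNormedRing A] [StarRing A] [CStarRing A] [NormedSpace ℂ A]
  [IsScalarTower ℂ A A] [SMulCommClass ℂ A A] [StarModule ℂ A] [CompleteSpace A]

/-- `α` is an action of the inverse semigroup `G` on the C*-algebra `A` making it a
`G`-algebra: a semigroup homomorphism `G → End(A)` into the *-endomorphisms of `A` such
that `g g*(a)·b = a·g g*(b)` for all `a b : A` and `g : G`. -/
structure IsGAlgebra (α : G → A →⋆ₙₐ[ℂ] A) : Prop where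
  map_mul : ∀ g h : G, α (g * h) = (α g).comp (α h)
  central : ∀ (g : G) (a b : A), α (g * star g) a * b = a * α (g * star g) b

variable (α : G → A →⋆ₙₐ[ℂ] A)

/-- The generator of the free *-algebra corresponding to `a ∈ A`. -/
def genA (a : A) : FreeStar (A ⊕ G) := MonoidAlgebra.single (FreeMonoid.of (Sum.inl a, false)) 1

/-- The generator of the free *-algebra corresponding to `g ∈ G`. -/
def genG (g : G) : FreeStar (A ⊕ G) := MonoidAlgebra.single (FreeMonoid.of (Sum.inr g, false)) 1

/-- The defining relations of `𝔽(G,A)`: the *-algebra relations of `A` are respected, the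
multiplication and involution of `G` are respected, and `g(a)·g g* = g·a·g*`,
`[g g*, a] = 0` hold; the relation is moreover closed under `star`, so that the ideal
generated by it is a two-sided *-ideal. -/
inductive Rel : FreeStar (A ⊕ G) → FreeStar (A ⊕ G) → Prop
  | add_A (a b : A) : Rel (genA (G := G) (a + b)) (genA a + genA b)
  | smul_A (c : ℂ) (a : A) : Rel (genA (G := G) (c • a)) (c • genA a)
  | mul_A (a b : A) : Rel (genA (G := G) (a * b)) (genA a * genA b)
  | star_A (a : A) : Rel (genA (G := G) (star a)) (star (genA a))
  | mul_G (g h : G) : Rel (genG (A := A) (g * h)) (genG g * genG h)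
  | star_G (g : G) : Rel (genG (A := A) (star g)) (star (genG g))
  | act (g : G) (a : A) :
      Rel (genA (α g a) * genG g * genG (star g)) (genG g * genA a * genG (star g))
  | comm (g : G) (a : A) :
      Rel (genG g * genG (star g) * genA a) (genA a * genG g * genG (star g))
  | star_cl {x y} : Rel x y → Rel (star x) (star y)

/-- The universal *-algebra `𝔽(G,A)`: the quotient of the free complex *-algebra on the
set `A ⊔ G` by the two-sided *-ideal generated by the defining relations. -/
abbrev F := RingQuot (Rel α)

instance : StarRing (F α) := RingQuot.starRing _ (fun _ _ h => Rel.star_cl h)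

/-- The canonical copy of `a ∈ A` inside `𝔽(G,A)`. -/
def ιA (a : A) : F α := RingQuot.mkAlgHom ℂ (Rel α) (genA a)

/-- The canonical copy of `g ∈ G` inside `𝔽(G,A)`. -/
def ιG (g : G) : F α := RingQuot.mkAlgHom ℂ (Rel α) (genG g)

/-- The element `e₀(1-e₁)⋯(1-eₙ)` of `𝔽(G,A)` (product expanded multiplicatively),
given `e₀` and the list `[e₁, …, eₙ]`. -/
def elemP (e₀ : G) (l : List G) : F α :=
  l.foldl (fun p e => p - p * ιG α e) (ιG α e₀)

/-- The element `g·e₀(1-e₁)⋯(1-eₙ)` of `𝔽(G,A)`. -/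
def elemGE (g e₀ : G) (l : List G) : F α := ιG α g * elemP α e₀ l

/-- The set `E(G)` of projections `e₀(1-e₁)⋯(1-eₙ)` in `𝔽(G,A)`, with `e₀, …, eₙ`
idempotents of `G`. -/
def EG : Set (F α) :=
  {x | ∃ (e₀ : G) (l : List G), e₀ * e₀ = e₀ ∧ (∀ e ∈ l, e * e = e) ∧ x = elemP α e₀ l}

/-- The inverse semigroup `G_E = {g·p | g ∈ G, p ∈ E(G)}` inside `𝔽(G,A)`. -/
def GE : Set (F α) :=
  {x | ∃ (g e₀ : G) (l : List G),
    e₀ * e₀ = e₀ ∧ (∀ e ∈ l, e * e = e) ∧ x = elemGE α g e₀ l}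

/-- The extension of the `G`-action along a list: `(id - α e₁)∘⋯∘(id - α eₙ)`. -/
def actL : List G → A → A
  | [] => id
  | e :: l => fun a => actL l a - α e (actL l a)

/-- The extension of the `G`-action to `E(G)`:
`α_{e₀(1-e₁)⋯(1-eₙ)} = α_{e₀}∘(id - α_{e₁})∘⋯∘(id - α_{eₙ})`. -/
def actP (e₀ : G) (l : List G) : A → A := fun a => α e₀ (actL α l a)

/-- The extension of the `G`-action to `G_E`: `α_{g·p} = α_g ∘ α_p`. -/
def actGE (g e₀ : G) (l : List G) : A → A := fun a => α g (actP α e₀ l a)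

/-- The action of `k* = (g·e₀(1-e₁)⋯(1-eₙ))* = g*·(g e₀ g*)(1 - g e₁ g*)⋯(1 - g eₙ g*)`,
for `k = g·e₀(1-e₁)⋯(1-eₙ) ∈ G_E`. -/
def actStar (g e₀ : G) (l : List G) : A → A :=
  fun a => α (star g) (actP α (g * e₀ * star g) (l.map fun e => g * e * star g) a)

/-- The subalgebra `A_{k k*} = α_{k k*}(A) = (α_k ∘ α_{k*})(A)`,
for `k = g·e₀(1-e₁)⋯(1-eₙ) ∈ G_E`. -/
def carrier (g e₀ : G) (l : List G) : Set A :=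
  Set.range fun a => actGE α g e₀ l (actStar α g e₀ l a)

/-- `S` is a sub-inverse semigroup of `G`: a subset closed under multiplication and
involution. -/
structure IsSubInvSemigroup (S : Set G) : Prop where
  mul_mem : ∀ {a b : G}, a ∈ S → b ∈ S → a * b ∈ S
  star_mem : ∀ {a : G}, a ∈ S → star a ∈ S

variable (S : Set G)

/-- The set `E(H')` of projections `e₀(1-e₁)⋯(1-eₙ)` with `e₀, …, eₙ` idempotents of
`H' = S`. -/
def EH : Set (F α) :=
  {x | ∃ (e₀ : G) (l : List G), (e₀ ∈ S ∧ e₀ * e₀ = e₀) ∧ (∀ e ∈ l, e ∈ S ∧ e * e = e) ∧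
    x = elemP α e₀ l}

/-- `H⁽⁰⁾`: the set of nonzero minimal projections of `E(H')`
(where `q ≤ p` means `q p = q`). -/
def H0 : Set (F α) :=
  {p | p ∈ EH α S ∧ p ≠ 0 ∧ ∀ q ∈ EH α S, q ≠ 0 → q * p = q → q = p}

/-- The groupoid `H = {t·e | t ∈ H', e ∈ H⁽⁰⁾} \ {0}` associated to `H'`. -/
def Hgpd : Set (F α) :=
  {x | x ≠ 0 ∧ ∃ t ∈ S, ∃ e ∈ H0 α S, x = ιG α t * e}

/-- `G_H = {g·e | g ∈ G, e ∈ H⁽⁰⁾, g* g ≥ e} \ {0}`. -/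
def GH : Set (F α) :=
  {x | x ≠ 0 ∧ ∃ (g : G), ∃ e ∈ H0 α S, x = ιG α g * e ∧ e * ιG α (star g * g) = e}

/-- The relation `≡` on `G_H`: `g ≡ h` iff `g t = h` for some `t ∈ H`. -/
def equivH (x y : F α) : Prop := ∃ t ∈ Hgpd α S, x * t = y

end GAlgebra

/-- For an assertion `P`, the scalar `[P]` which is `1` if `P` is true and `0` if `P`
is false. -/
def ind (P : Prop) : ℂ := @ite _ P (Classical.propDecidable P) 1 0

end Green

/-!
Both sides are multiples of the same element `x w` of `𝔽`, where `x = g·p` and `w = h* k`,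
so only the scalars and the coefficients in `A` have to be compared. For an idempotent `e`,
`α_e` is an idempotent endomorphism with `α_e(a) b = a α_e(b)`, so `id - α_e` is
multiplicative; hence `α_g ∘ α_{h*}` splits `b* c`.

For the scalars, assume `x w ≠ 0`. By minimality, every projection of `E(H')` multiplies a
minimal projection, and hence every element of `H`, to `0` or to itself. If `w = t·e ∈ H`,
then `p w = w`, so `x w = (g t)·e` with `(x w)* (x w) = w* p w = e`: thus `x w ∈ G_H` and
`x ≡ x w`. Conversely, if `x u = x w` with `u ∈ H`, multiplying by `x* x = p` gives
`p w = p u = u ≠ 0`; since `w = q w` for the minimal projection `q` of `h`, this forces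
`p = q`, and then `w = q w = p w = u ∈ H`.
-/

theorem sub_apply_mul_sub_apply {R : Type*} [NonUnitalRing R] {f : R → R}
    (hmul : ∀ x y, f (x * y) = f x * f y) (hidem : ∀ x, f (f x) = f x)
    (hcomm : ∀ x y, f x * y = x * f y) (x y : R) :
    (x - f x) * (y - f y) = x * y - f (x * y) := by
  have h : f x * f y = x * f y := by rw [hcomm, hidem]
  rw [hmul, h, sub_mul, mul_sub, mul_sub, hcomm, h, sub_self, sub_zero]

namespace InverseSemigroup

variable {G : Type*} [InverseSemigroup G]

instance : InvolutiveStar G where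
  star_involutive g :=
    (star_unique (star g) g (star_mul_self_mul_star g) (mul_star_mul_self g)).symm

theorem isSelfAdjoint_of_isIdempotentElem {e : G} (he : IsIdempotentElem e) :
    IsSelfAdjoint e :=
  (star_unique e e (by rw [he.eq, he.eq]) (by rw [he.eq, he.eq])).symm

theorem isIdempotentElem_mul {e f : G} (he : IsIdempotentElem e) (hf : IsIdempotentElem f) :
    IsIdempotentElem (e * f) := by
  set y := star (e * f)
  -- `f y e` is a generalized inverse of `e f`, hence equal to `y`; so `y` is idempotent,
  -- hence self-adjoint, and `e f = y* = y`
  have hfye : f * y * e = y := by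
    refine star_unique (e * f) (f * y * e) ?_ ?_
    · calc e * f * (f * y * e) * (e * f) = e * f * y * (e * f) := by
            simp only [mul_assoc, hf.mul_self_mul, he.mul_self_mul]
        _ = e * f := mul_star_mul_self _
    · calc f * y * e * (e * f) * (f * y * e) = f * (y * (e * f) * y) * e := by
            simp only [mul_assoc, hf.mul_self_mul, he.mul_self_mul]
        _ = f * y * e := by rw [star_mul_self_mul_star]
  have hy : IsIdempotentElem y := by
    calc y * y = f * (y * (e * f) * y) * e := by
          conv_lhs => rw [← hfye]
          simp only [mul_assoc]
      _ = y := by rw [star_mul_self_mul_star, hfye]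
  have hef : e * f = y := by
    rw [← star_star (e * f)]
    exact (isSelfAdjoint_of_isIdempotentElem hy).star_eq
  rwa [hef]

theorem commute_of_isIdempotentElem {e f : G} (he : IsIdempotentElem e)
    (hf : IsIdempotentElem f) : Commute e f := by
  have hef := isIdempotentElem_mul he hf
  have hfe := isIdempotentElem_mul hf he
  have h : f * e = star (e * f) := by
    refine star_unique (e * f) (f * e) ?_ ?_ <;>
      simp only [mul_assoc, he.mul_self_mul, hf.mul_self_mul]
    · simpa only [mul_assoc] using hef.eq
    · simpa only [mul_assoc] using hfe.eq
  exact (h.trans (isSelfAdjoint_of_isIdempotentElem hef).star_eq).symm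

theorem isIdempotentElem_star_mul_self (g : G) : IsIdempotentElem (star g * g) := by
  rw [IsIdempotentElem, ← mul_assoc, star_mul_self_mul_star]

theorem isIdempotentElem_mul_star_self (g : G) : IsIdempotentElem (g * star g) := by
  rw [IsIdempotentElem, ← mul_assoc, mul_star_mul_self]

theorem isIdempotentElem_conj {e : G} (he : IsIdempotentElem e) (g : G) :
    IsIdempotentElem (g * e * star g) := by
  have hc : star g * g * e = e * (star g * g) :=
    commute_of_isIdempotentElem (isIdempotentElem_star_mul_self g) he
  calc g * e * star g * (g * e * star g) = g * (e * (star g * g)) * e * star g := by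
        simp only [mul_assoc]
    _ = g * star g * g * e * e * star g := by rw [← hc]; simp only [mul_assoc]
    _ = g * e * star g := by rw [mul_star_mul_self, he.mul_mul_self]

theorem mul_eq_mul_star_mul_mul_of_isIdempotentElem {e : G} (he : IsIdempotentElem e) (g : G) :
    e * g = g * (star g * e * g) := by
  have hc := commute_of_isIdempotentElem (isIdempotentElem_mul_star_self g) he
  calc e * g = e * (g * star g) * g := by
        rw [mul_assoc, mul_assoc, ← mul_assoc g, mul_star_mul_self]
    _ = g * (star g * e * g) := by rw [← hc.eq]; simp only [mul_assoc]

end InverseSemigroup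

namespace Green

open InverseSemigroup

section Projections

variable {G : Type*} [InverseSemigroup G]
variable {A : Type*} [NonUnitalNormedRing A] [StarRing A] [NormedSpace ℂ A]
variable (α : G → A →⋆ₙₐ[ℂ] A)

theorem star_mkAlgHom (x : FreeStar (A ⊕ G)) :
    star (RingQuot.mkAlgHom ℂ (Rel α) x) = RingQuot.mkAlgHom ℂ (Rel α) (star x) := by
  have hmk (y : FreeStar (A ⊕ G)) : RingQuot.mkAlgHom ℂ (Rel α) y = ⟨Quot.mk _ y⟩ := by
    rw [RingQuot.mkAlgHom_def]
    change RingQuot.mkRingHom (Rel α) y = _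
    rw [RingQuot.mkRingHom_def]
    rfl
  rw [hmk, hmk]
  rfl

theorem ιG_mul (g h : G) : ιG α g * ιG α h = ιG α (g * h) := by
  rw [ιG, ιG, ιG, RingQuot.mkAlgHom_rel ℂ (Rel.mul_G g h), map_mul]

theorem star_ιG (g : G) : star (ιG α g) = ιG α (star g) := by
  rw [ιG, ιG, star_mkAlgHom, RingQuot.mkAlgHom_rel ℂ (Rel.star_G g)]

theorem isStarProjection_ιG {e : G} (he : IsIdempotentElem e) : IsStarProjection (ιG α e) :=
  ⟨by rw [IsIdempotentElem, ιG_mul, he.eq],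
    by rw [IsSelfAdjoint, star_ιG, (isSelfAdjoint_of_isIdempotentElem he).star_eq]⟩

theorem commute_ιG {e f : G} (he : IsIdempotentElem e) (hf : IsIdempotentElem f) :
    Commute (ιG α e) (ιG α f) := by
  rw [Commute, SemiconjBy, ιG_mul, ιG_mul, (commute_of_isIdempotentElem he hf).eq]

def oneSubProd (l : List G) : F α := (l.map fun e => 1 - ιG α e).prod

theorem oneSubProd_cons (e : G) (l : List G) :
    oneSubProd α (e :: l) = (1 - ιG α e) * oneSubProd α l := by
  rw [oneSubProd, List.map_cons, List.prod_cons, oneSubProd]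

theorem oneSubProd_append (l m : List G) :
    oneSubProd α (l ++ m) = oneSubProd α l * oneSubProd α m := by
  rw [oneSubProd, List.map_append, List.prod_append, oneSubProd, oneSubProd]

theorem elemP_eq_ιG_mul_oneSubProd (e₀ : G) (l : List G) :
    elemP α e₀ l = ιG α e₀ * oneSubProd α l := by
  suffices ∀ v : F α, l.foldl (fun p e => p - p * ιG α e) v = v * oneSubProd α l from this _
  induction l with
  | nil => intro v; rw [List.foldl_nil, oneSubProd, List.map_nil, List.prod_nil, mul_one]
  | cons e l ih => intro v; rw [List.foldl_cons, ih, oneSubProd_cons, ← mul_assoc, mul_one_sub]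

variable {α}

theorem commute_oneSubProd_ιG {l : List G} (hl : ∀ e ∈ l, IsIdempotentElem e) {f : G}
    (hf : IsIdempotentElem f) : Commute (oneSubProd α l) (ιG α f) := by
  refine Commute.list_prod_left _ _ fun x hx => ?_
  obtain ⟨e, he, rfl⟩ := List.mem_map.mp hx
  exact (Commute.one_left _).sub_left (commute_ιG α (hl e he) hf)

theorem commute_oneSubProd {l m : List G} (hl : ∀ e ∈ l, IsIdempotentElem e)
    (hm : ∀ e ∈ m, IsIdempotentElem e) : Commute (oneSubProd α l) (oneSubProd α m) := by
  refine Commute.list_prod_right _ _ fun x hx => ?_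
  obtain ⟨e, he, rfl⟩ := List.mem_map.mp hx
  exact (Commute.one_right _).sub_right (commute_oneSubProd_ιG hl (hm e he))

theorem isStarProjection_oneSubProd {l : List G} (hl : ∀ e ∈ l, IsIdempotentElem e) :
    IsStarProjection (oneSubProd α l) := by
  induction l with
  | nil => exact IsStarProjection.one _
  | cons e l ih =>
    have he := hl e List.mem_cons_self
    have hl' := fun e' h' => hl e' (List.mem_cons_of_mem _ h')
    rw [oneSubProd_cons]
    exact (isStarProjection_ιG α he).one_sub.mul (ih hl')
      ((Commute.one_left _).sub_left (commute_oneSubProd_ιG hl' he).symm)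

theorem oneSubProd_mul_ιG {l : List G} (hl : ∀ e ∈ l, IsIdempotentElem e) (t : G) :
    oneSubProd α l * ιG α t = ιG α t * oneSubProd α (l.map fun e => star t * e * t) := by
  induction l with
  | nil => simp only [oneSubProd, List.map_nil, List.prod_nil, one_mul, mul_one]
  | cons e l ih =>
    have he := hl e List.mem_cons_self
    have hl' := fun e' h' => hl e' (List.mem_cons_of_mem _ h')
    rw [List.map_cons, oneSubProd_cons, oneSubProd_cons, mul_assoc, ih hl', ← mul_assoc,
      ← mul_assoc, one_sub_mul, mul_one_sub, ιG_mul, ιG_mul,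
      mul_eq_mul_star_mul_mul_of_isIdempotentElem he t]

variable {e₀ f₀ : G} {l m : List G}

theorem isStarProjection_elemP (he₀ : IsIdempotentElem e₀)
    (hl : ∀ e ∈ l, IsIdempotentElem e) : IsStarProjection (elemP α e₀ l) := by
  rw [elemP_eq_ιG_mul_oneSubProd]
  exact (isStarProjection_ιG α he₀).mul (isStarProjection_oneSubProd hl)
    (commute_oneSubProd_ιG hl he₀).symm

theorem commute_elemP_ιG (he₀ : IsIdempotentElem e₀) (hl : ∀ e ∈ l, IsIdempotentElem e)
    {f : G} (hf : IsIdempotentElem f) : Commute (elemP α e₀ l) (ιG α f) := by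
  rw [elemP_eq_ιG_mul_oneSubProd]
  exact (commute_ιG α he₀ hf).mul_left (commute_oneSubProd_ιG hl hf)

theorem commute_elemP (he₀ : IsIdempotentElem e₀) (hl : ∀ e ∈ l, IsIdempotentElem e)
    (hf₀ : IsIdempotentElem f₀) (hm : ∀ e ∈ m, IsIdempotentElem e) :
    Commute (elemP α e₀ l) (elemP α f₀ m) := by
  rw [elemP_eq_ιG_mul_oneSubProd α f₀]
  refine (commute_elemP_ιG he₀ hl hf₀).mul_right ?_
  rw [elemP_eq_ιG_mul_oneSubProd]
  exact (commute_oneSubProd_ιG hm he₀).symm.mul_left (commute_oneSubProd hl hm)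

theorem elemP_mul_elemP (hl : ∀ e ∈ l, IsIdempotentElem e) (hf₀ : IsIdempotentElem f₀) :
    elemP α e₀ l * elemP α f₀ m = elemP α (e₀ * f₀) (l ++ m) := by
  simp only [elemP_eq_ιG_mul_oneSubProd, oneSubProd_append, ← ιG_mul]
  rw [mul_assoc, ← mul_assoc (oneSubProd α l), (commute_oneSubProd_ιG hl hf₀).eq]
  simp only [mul_assoc]

theorem elemP_mul_ιG (he₀ : IsIdempotentElem e₀) (hl : ∀ e ∈ l, IsIdempotentElem e)
    (t : G) : elemP α e₀ l * ιG α t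
      = ιG α t * elemP α (star t * e₀ * t) (l.map fun e => star t * e * t) := by
  rw [elemP_eq_ιG_mul_oneSubProd, elemP_eq_ιG_mul_oneSubProd, mul_assoc, oneSubProd_mul_ιG hl,
    ← mul_assoc, ιG_mul, mul_eq_mul_star_mul_mul_of_isIdempotentElem he₀ t, ← ιG_mul,
    mul_assoc]

end Projections

section Groupoid

variable {G : Type*} [InverseSemigroup G]
variable {A : Type*} [NonUnitalNormedRing A] [StarRing A] [NormedSpace ℂ A]
variable {α : G → A →⋆ₙₐ[ℂ] A} {S : Set G}

theorem isStarProjection_of_mem_EG {p : F α} (hp : p ∈ EG α) : IsStarProjection p := by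
  obtain ⟨e₀, l, he₀, hl, rfl⟩ := hp
  exact isStarProjection_elemP he₀ hl

theorem commute_of_mem_EG {p q : F α} (hp : p ∈ EG α) (hq : q ∈ EG α) : Commute p q := by
  obtain ⟨e₀, l, he₀, hl, rfl⟩ := hp
  obtain ⟨f₀, m, hf₀, hm, rfl⟩ := hq
  exact commute_elemP he₀ hl hf₀ hm

theorem commute_ιG_of_mem_EG {p : F α} (hp : p ∈ EG α) {f : G} (hf : IsIdempotentElem f) :
    Commute p (ιG α f) := by
  obtain ⟨e₀, l, he₀, hl, rfl⟩ := hp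
  exact commute_elemP_ιG he₀ hl hf

theorem star_ιG_mul_mul_self {p : F α} (hp : p ∈ EG α) (g : G) :
    star (ιG α g * p) * (ιG α g * p) = p * ιG α (star g * g) := by
  have hp' := isStarProjection_of_mem_EG hp
  rw [star_mul, hp'.isSelfAdjoint.star_eq, star_ιG, mul_assoc, ← mul_assoc (ιG α (star g)),
    ιG_mul, ← (commute_ιG_of_mem_EG hp (isIdempotentElem_star_mul_self g)).eq, ← mul_assoc,
    hp'.isIdempotentElem.eq]

theorem EH_subset_EG : EH α S ⊆ EG α := by
  rintro _ ⟨e₀, l, ⟨-, he₀⟩, hl, rfl⟩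
  exact ⟨e₀, l, he₀, fun e he => (hl e he).2, rfl⟩

theorem ιG_mem_EH {e : G} (heS : e ∈ S) (he : IsIdempotentElem e) : ιG α e ∈ EH α S :=
  ⟨e, [], ⟨heS, he⟩, by simp, rfl⟩

theorem mul_mem_EH (hS : IsSubInvSemigroup S) {p q : F α} (hp : p ∈ EH α S)
    (hq : q ∈ EH α S) : p * q ∈ EH α S := by
  obtain ⟨e₀, l, ⟨he₀S, he₀⟩, hl, rfl⟩ := hp
  obtain ⟨f₀, m, ⟨hf₀S, hf₀⟩, hm, rfl⟩ := hq
  rw [elemP_mul_elemP (fun e he => (hl e he).2) hf₀]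
  refine ⟨e₀ * f₀, l ++ m, ⟨hS.mul_mem he₀S hf₀S, isIdempotentElem_mul he₀ hf₀⟩,
    fun e he => ?_, rfl⟩
  rcases List.mem_append.mp he with h | h
  exacts [hl e h, hm e h]

theorem exists_mem_EH_mul_ιG_eq (hS : IsSubInvSemigroup S) {p : F α} (hp : p ∈ EH α S)
    {t : G} (ht : t ∈ S) : ∃ p' ∈ EH α S, p * ιG α t = ιG α t * p' := by
  obtain ⟨e₀, l, ⟨he₀S, he₀⟩, hl, rfl⟩ := hp
  have hconj {e : G} (heS : e ∈ S) (he : IsIdempotentElem e) :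
      star t * e * t ∈ S ∧ IsIdempotentElem (star t * e * t) := by
    refine ⟨hS.mul_mem (hS.mul_mem (hS.star_mem ht) heS) ht, ?_⟩
    simpa only [star_star] using isIdempotentElem_conj he (star t)
  refine ⟨_, ⟨star t * e₀ * t, l.map fun e => star t * e * t, hconj he₀S he₀, ?_, rfl⟩,
    elemP_mul_ιG he₀ (fun e he => (hl e he).2) t⟩
  intro e he
  obtain ⟨e', he', rfl⟩ := List.mem_map.mp he
  exact hconj (hl e' he').1 (hl e' he').2

theorem mul_eq_zero_or_self_of_mem_H0 (hS : IsSubInvSemigroup S) {p e : F α}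
    (hp : p ∈ EH α S) (he : e ∈ H0 α S) : p * e = 0 ∨ p * e = e := by
  refine or_iff_not_imp_left.mpr fun hpe => he.2.2 _ (mul_mem_EH hS hp he.1) hpe ?_
  rw [mul_assoc, (isStarProjection_of_mem_EG (EH_subset_EG he.1)).isIdempotentElem.eq]

theorem mul_eq_zero_or_eq_of_mem_H0 (hS : IsSubInvSemigroup S) {p q : F α}
    (hp : p ∈ H0 α S) (hq : q ∈ H0 α S) : p * q = 0 ∨ p = q := by
  refine or_iff_not_imp_left.mpr fun hpq => ?_
  have hcomm := commute_of_mem_EG (EH_subset_EG hp.1) (EH_subset_EG hq.1)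
  have h1 : p * q = q := (mul_eq_zero_or_self_of_mem_H0 hS hp.1 hq).resolve_left hpq
  have h2 : q * p = p :=
    (mul_eq_zero_or_self_of_mem_H0 hS hq.1 hp).resolve_left (hcomm.eq ▸ hpq)
  rw [← h2, ← hcomm.eq, h1]

theorem mul_eq_zero_or_self_of_mem_Hgpd (hS : IsSubInvSemigroup S) {p u : F α}
    (hp : p ∈ EH α S) (hu : u ∈ Hgpd α S) : p * u = 0 ∨ p * u = u := by
  obtain ⟨-, t, ht, e, he, rfl⟩ := hu
  obtain ⟨p', hp', hpt⟩ := exists_mem_EH_mul_ιG_eq hS hp ht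
  rw [← mul_assoc, hpt, mul_assoc]
  rcases mul_eq_zero_or_self_of_mem_H0 hS hp' he with h | h <;> rw [h]
  exacts [Or.inl (mul_zero _), Or.inr rfl]

theorem star_mul_self_of_mem_Hgpd (hS : IsSubInvSemigroup S) {t : G} (ht : t ∈ S)
    {e : F α} (he : e ∈ H0 α S) (hte : ιG α t * e ≠ 0) :
    star (ιG α t * e) * (ιG α t * e) = e := by
  rw [star_ιG_mul_mul_self (EH_subset_EG he.1),
    (commute_ιG_of_mem_EG (EH_subset_EG he.1) (isIdempotentElem_star_mul_self t)).eq]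
  refine (mul_eq_zero_or_self_of_mem_H0 hS (ιG_mem_EH (hS.mul_mem (hS.star_mem ht) ht)
    (isIdempotentElem_star_mul_self t)) he).resolve_left fun h => hte ?_
  rw [← mul_star_mul_self t, mul_assoc, ← ιG_mul, mul_assoc, h, mul_zero]

theorem star_mul_self_of_mem_GH {g : G} {p : F α} (hp : p ∈ H0 α S)
    (hx : ιG α g * p ∈ GH α S) : star (ιG α g * p) * (ιG α g * p) = p := by
  obtain ⟨-, g₁, e₁, he₁, hx_eq, he₁_le⟩ := hx
  have hpEG := EH_subset_EG hp.1
  have hx₁ : star (ιG α g * p) * (ιG α g * p) = e₁ := by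
    rw [hx_eq, star_ιG_mul_mul_self (EH_subset_EG he₁.1), he₁_le]
  -- `e₁ = p (g* g) ≤ p`, so minimality of `p` forces `e₁ = p`
  have he₁p : e₁ * p = e₁ := by
    rw [← hx₁, star_ιG_mul_mul_self hpEG, mul_assoc,
      ← (commute_ιG_of_mem_EG hpEG (isIdempotentElem_star_mul_self g)).eq, ← mul_assoc,
      (isStarProjection_of_mem_EG hpEG).isIdempotentElem.eq]
  rw [hx₁, hp.2.2 e₁ he₁.1 he₁.2.1 he₁p]

theorem mem_GH_of_star_mul_self {x e : F α} {g : G} (hx : x ≠ 0) (he : e ∈ H0 α S)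
    (hxe : x = ιG α g * e) (hxx : star x * x = e) : x ∈ GH α S :=
  ⟨hx, g, e, he, hxe, by rw [← star_ιG_mul_mul_self (EH_subset_EG he.1), ← hxe, hxx]⟩

theorem mem_GH_of_mem_Hgpd (hS : IsSubInvSemigroup S) {g : G} {p w : F α} (hp : p ∈ H0 α S)
    (hx : ιG α g * p ∈ GH α S) (hw : w ∈ Hgpd α S) (hX : ιG α g * p * w ≠ 0) :
    ιG α g * p * w ∈ GH α S := by
  have hpw : p * w = w := (mul_eq_zero_or_self_of_mem_Hgpd hS hp.1 hw).resolve_left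
    fun h => hX (by rw [mul_assoc, h, mul_zero])
  obtain ⟨hw0, t, ht, e, he, rfl⟩ := hw
  refine mem_GH_of_star_mul_self (g := g * t) hX he ?_ ?_
  · rw [mul_assoc, hpw, ← mul_assoc, ιG_mul]
  · calc star (ιG α g * p * (ιG α t * e)) * (ιG α g * p * (ιG α t * e))
          = star (ιG α t * e) * (star (ιG α g * p) * (ιG α g * p)) * (ιG α t * e) := by
            rw [star_mul]; simp only [mul_assoc]
      _ = star (ιG α t * e) * (ιG α t * e) := by
            rw [star_mul_self_of_mem_GH hp hx, mul_assoc, hpw]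
      _ = e := star_mul_self_of_mem_Hgpd hS ht he hw0

theorem mem_Hgpd_of_equivH (hS : IsSubInvSemigroup S) {g : G} {p q w : F α}
    (hp : p ∈ H0 α S) (hx : ιG α g * p ∈ GH α S) (hq : q ∈ H0 α S) (hqw : q * w = w)
    (hX : ιG α g * p * w ≠ 0) (hxX : equivH α S (ιG α g * p) (ιG α g * p * w)) :
    w ∈ Hgpd α S := by
  obtain ⟨u, hu, hxu⟩ := hxX
  have hpu : p * u = u := (mul_eq_zero_or_self_of_mem_Hgpd hS hp.1 hu).resolve_left
    fun h => hX (by rw [← hxu, mul_assoc, h, mul_zero])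
  have hpw : p * w = u := by
    have h := congrArg (star (ιG α g * p) * ·) hxu
    simp only [← mul_assoc, star_mul_self_of_mem_GH hp hx] at h
    rw [← h, hpu]
  have hpq : p = q := (mul_eq_zero_or_eq_of_mem_H0 hS hp hq).resolve_left
    fun h => hu.1 (by rw [← hpw, ← hqw, ← mul_assoc, h, zero_mul])
  rwa [← hqw, ← hpq, hpw]

theorem mem_Hgpd_iff (hS : IsSubInvSemigroup S) {g e₀ h f₀ : G} {l m : List G} {z : F α}
    (hp : elemP α e₀ l ∈ H0 α S) (hx : elemGE α g e₀ l ∈ GH α S)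
    (hq : elemP α f₀ m ∈ H0 α S)
    (hX : elemGE α g e₀ l * (star (elemGE α h f₀ m) * z) ≠ 0) :
    star (elemGE α h f₀ m) * z ∈ Hgpd α S ↔
      elemGE α g e₀ l * (star (elemGE α h f₀ m) * z) ∈ GH α S ∧
        equivH α S (elemGE α g e₀ l)
          (elemGE α g e₀ l * (star (elemGE α h f₀ m) * z)) := by
  have hq' := isStarProjection_of_mem_EG (EH_subset_EG hq.1)
  have hqw : elemP α f₀ m * (star (elemGE α h f₀ m) * z) = star (elemGE α h f₀ m) * z := by
    rw [elemGE, star_mul, hq'.isSelfAdjoint.star_eq, ← mul_assoc, ← mul_assoc,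
      hq'.isIdempotentElem.eq]
  exact ⟨fun hw => ⟨mem_GH_of_mem_Hgpd hS hp hx hw hX, _, hw, rfl⟩,
    fun hw => mem_Hgpd_of_equivH hS hp hx hq hqw hX hw.2⟩

end Groupoid

section Action

variable {G : Type*} [InverseSemigroup G]
variable {A : Type*} [NonUnitalNormedRing A] [StarRing A] [NormedSpace ℂ A]
variable {α : G → A →⋆ₙₐ[ℂ] A}

theorem IsGAlgebra.apply_mul_of_isIdempotentElem (hα : IsGAlgebra α) {e : G}
    (he : IsIdempotentElem e) (u v : A) : α e u * v = u * α e v := by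
  simpa only [(isSelfAdjoint_of_isIdempotentElem he).star_eq, he.eq] using hα.central e u v

theorem IsGAlgebra.apply_apply_of_isIdempotentElem (hα : IsGAlgebra α) {e : G}
    (he : IsIdempotentElem e) (u : A) : α e (α e u) = α e u := by
  simpa only [he.eq, NonUnitalStarAlgHom.comp_apply] using
    (DFunLike.congr_fun (hα.map_mul e e) u).symm

variable (hα : IsGAlgebra α)
include hα

theorem actL_mul {l : List G} (hl : ∀ e ∈ l, IsIdempotentElem e) (u v : A) :
    actL α l (u * v) = actL α l u * actL α l v := by
  induction l with
  | nil => rfl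
  | cons e l ih =>
    have he := hl e List.mem_cons_self
    simp only [actL]
    rw [ih fun e' h' => hl e' (List.mem_cons_of_mem _ h'),
      sub_apply_mul_sub_apply (map_mul (α e)) (hα.apply_apply_of_isIdempotentElem he)
        (hα.apply_mul_of_isIdempotentElem he)]

theorem actP_mul {e₀ : G} {l : List G} (hl : ∀ e ∈ l, IsIdempotentElem e) (u v : A) :
    actP α e₀ l (u * v) = actP α e₀ l u * actP α e₀ l v := by
  simp only [actP, actL_mul hα hl, map_mul]

theorem actGE_mul {g e₀ : G} {l : List G} (hl : ∀ e ∈ l, IsIdempotentElem e) (u v : A) :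
    actGE α g e₀ l (u * v) = actGE α g e₀ l u * actGE α g e₀ l v := by
  simp only [actGE, actP_mul hα hl, map_mul]

theorem actStar_mul {g e₀ : G} {l : List G} (hl : ∀ e ∈ l, IsIdempotentElem e) (u v : A) :
    actStar α g e₀ l (u * v) = actStar α g e₀ l u * actStar α g e₀ l v := by
  have hl' : ∀ e ∈ l.map (fun e => g * e * star g), IsIdempotentElem e := by
    intro e he
    obtain ⟨e', he', rfl⟩ := List.mem_map.mp he
    exact isIdempotentElem_conj (hl e' he') g
  simp only [actStar, actP_mul hα hl', map_mul]

end Action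

theorem ind_and (P Q : Prop) : ind (P ∧ Q) = ind P * ind Q := by
  by_cases hP : P <;> by_cases hQ : Q <;> simp [ind, hP, hQ]

theorem inner_product_compatibility_general
    {G : Type*} [InverseSemigroup G]
    {A : Type*} [NonUnitalNormedRing A] [StarRing A] [NormedSpace ℂ A]
    (α : G → A →⋆ₙₐ[ℂ] A) (hα : IsGAlgebra α)
    (S : Set G) (hS : IsSubInvSemigroup S)
    (gg ge₀ : G) (gl : List G) (hgl : ∀ e ∈ gl, e * e = e)
    (hgH0 : elemP α ge₀ gl ∈ H0 α S) (hgGH : elemGE α gg ge₀ gl ∈ GH α S)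
    (hg he₀ : G) (lh : List G) (hlh : ∀ e ∈ lh, e * e = e)
    (hhH0 : elemP α he₀ lh ∈ H0 α S)
    (kg ke₀ : G) (lk : List G)
    (a b c : A) :
    ind (star (elemGE α hg he₀ lh) * elemGE α kg ke₀ lk ∈ Hgpd α S) •
      (ιA α (a * actGE α gg ge₀ gl (actStar α hg he₀ lh (star b * c))) *
        (elemGE α gg ge₀ gl * star (elemGE α hg he₀ lh) * elemGE α kg ke₀ lk))
    = (ind (elemGE α gg ge₀ gl * star (elemGE α hg he₀ lh) * elemGE α kg ke₀ lk ∈ GH α S) *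
       ind (equivH α S (elemGE α gg ge₀ gl)
             (elemGE α gg ge₀ gl * star (elemGE α hg he₀ lh) * elemGE α kg ke₀ lk))) •
      (ιA α (a * actGE α gg ge₀ gl (actStar α hg he₀ lh (star b)) *
          actGE α gg ge₀ gl (actStar α hg he₀ lh c)) *
        (elemGE α gg ge₀ gl * star (elemGE α hg he₀ lh) * elemGE α kg ke₀ lk)) := by
  rw [actStar_mul hα hlh, actGE_mul hα hgl, ← mul_assoc a, mul_assoc (elemGE α gg ge₀ gl)]
  by_cases hX : elemGE α gg ge₀ gl * (star (elemGE α hg he₀ lh) * elemGE α kg ke₀ lk) = 0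
  · rw [hX, mul_zero, smul_zero, smul_zero]
  · rw [mem_Hgpd_iff hS hgH0 hgGH hhH0 hX, ind_and]

/-- The identity `x·⟨y,z⟩_{B₀} = ⟨x,y⟩_{E₀}·z` on standard elements
`x = a⋊g`, `y = b⋊h`, `z = c⋊k`:  for all `g, h, k ∈ G_H` (given by representations)
and all `a ∈ A_{g g*}`, `b ∈ A_{h h*}`, `c ∈ A_{k k*}`,
`[h* k ∈ H] · a·α_g(α_{h*}(b*·c)) · (g h* k)
  = [g h* k ∈ G_H]·[g ≡ g h* k] · a·α_{g h*}(b*)·α_{g h*}(c) · (g h* k)`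
holds in `𝔽(G,A)`. -/
theorem inner_product_compatibility
    {G : Type*} [InverseSemigroup G]
    {A : Type*} [NonUnitalNormedRing A] [StarRing A] [CStarRing A] [NormedSpace ℂ A]
    [IsScalarTower ℂ A A] [SMulCommClass ℂ A A] [StarModule ℂ A] [CompleteSpace A]
    (α : G → A →⋆ₙₐ[ℂ] A) (hα : IsGAlgebra α)
    (S : Set G) (hS : IsSubInvSemigroup S) (hSfin : S.Finite)
    (gg ge₀ : G) (gl : List G) (hge : ge₀ * ge₀ = ge₀) (hgl : ∀ e ∈ gl, e * e = e)
    (hgH0 : elemP α ge₀ gl ∈ H0 α S) (hgGH : elemGE α gg ge₀ gl ∈ GH α S)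
    (hg he₀ : G) (lh : List G) (hhe : he₀ * he₀ = he₀) (hlh : ∀ e ∈ lh, e * e = e)
    (hhH0 : elemP α he₀ lh ∈ H0 α S) (hhGH : elemGE α hg he₀ lh ∈ GH α S)
    (kg ke₀ : G) (lk : List G) (hke : ke₀ * ke₀ = ke₀) (hlk : ∀ e ∈ lk, e * e = e)
    (hkH0 : elemP α ke₀ lk ∈ H0 α S) (hkGH : elemGE α kg ke₀ lk ∈ GH α S)
    (a b c : A) (ha : a ∈ carrier α gg ge₀ gl) (hb : b ∈ carrier α hg he₀ lh)
    (hc : c ∈ carrier α kg ke₀ lk) :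
    ind (star (elemGE α hg he₀ lh) * elemGE α kg ke₀ lk ∈ Hgpd α S) •
      (ιA α (a * actGE α gg ge₀ gl (actStar α hg he₀ lh (star b * c))) *
        (elemGE α gg ge₀ gl * star (elemGE α hg he₀ lh) * elemGE α kg ke₀ lk))
    = (ind (elemGE α gg ge₀ gl * star (elemGE α hg he₀ lh) * elemGE α kg ke₀ lk ∈ GH α S) *
       ind (equivH α S (elemGE α gg ge₀ gl)
             (elemGE α gg ge₀ gl * star (elemGE α hg he₀ lh) * elemGE α kg ke₀ lk))) •
      (ιA α (a * actGE α gg ge₀ gl (actStar α hg he₀ lh (star b)) *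
          actGE α gg ge₀ gl (actStar α hg he₀ lh c)) *
        (elemGE α gg ge₀ gl * star (elemGE α hg he₀ lh) * elemGE α kg ke₀ lk)) :=
  inner_product_compatibility_general α hα S hS gg ge₀ gl hgl hgH0 hgGH hg he₀ lh hlh hhH0 kg ke₀ lk
    a b c

end Green
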